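/- arXiv:2307.10815 — 2 statements merged into one kernel-verified Lean document; each statement's English description precedes it below -/
import Mathlib

section
/- Let g ∈ ℝ^N, S ≤ N, let g_sp be g with all but the top-S magnitude entries set to zero, let g_S ∈ ℝ^S be those top-S values with sample mean μ_S and sample variance ν_S, and let ĝ be the reconstruction obtained by inserting an estimate ĝ_S (with E[‖g_S − ĝ_S‖²] = S ν_S (1 − γ²/ψ)) into the top-S positions. Then E[‖g − ĝ‖²] = ‖g‖² − (γ²/ψ)‖g_S‖² − S μ_S² (1 − γ²/ψ). -/
/-!
Off the top-`S` positions the reconstruction is zero, so there the error is just `g` itself, while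
on them it is the error of the estimate `ĝ_S`. Hence
`‖g - ĝ‖² = ‖g_S - ĝ_S‖² + (‖g‖² - ‖g_S‖²)` pointwise; taking expectations and using
`S ν_S = ‖g_S‖² - S μ_S²` gives the formula.
-/

open MeasureTheory

theorem Fintype.sum_sq_sub_eq_of_eq_zero_off_range {ι κ R : Type*} [Fintype ι] [Fintype κ]
    [CommRing R] (e : ι → κ) (he : Function.Injective e) (x y : κ → R)
    (hy : ∀ j ∉ Set.range e, y j = 0) :
    ∑ j, (x j - y j) ^ 2 = ∑ i, (x (e i) - y (e i)) ^ 2 + (∑ j, x j ^ 2 - ∑ i, x (e i) ^ 2) := by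
  have hdiff : ∑ i, ((x (e i) - y (e i)) ^ 2 - x (e i) ^ 2) = ∑ j, ((x j - y j) ^ 2 - x j ^ 2) :=
    Fintype.sum_of_injective e he _ _ (fun j hj => by simp [hy j hj]) fun _ => rfl
  simp only [Finset.sum_sub_distrib] at hdiff
  linear_combination -hdiff

theorem Fintype.card_mul_sum_sq_div_card_sub_sq {ι K : Type*} [Fintype ι] [Field K] [CharZero K]
    (v : ι → K) (μ : K) :
    (Fintype.card ι : K) * ((∑ i, v i ^ 2) / Fintype.card ι - μ ^ 2)
      = ∑ i, v i ^ 2 - Fintype.card ι * μ ^ 2 := by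
  rcases isEmpty_or_nonempty ι with _ | _
  · simp
  · have hcard : (Fintype.card ι : K) ≠ 0 := Nat.cast_ne_zero.mpr Fintype.card_ne_zero
    field_simp

theorem integral_add_const_of_isProbabilityMeasure {Ω : Type*} [MeasurableSpace Ω]
    {P : Measure Ω} [IsProbabilityMeasure P] {X : Ω → ℝ} (hX : Integrable X P) (c : ℝ) :
    ∫ ω, (X ω + c) ∂P = ∫ ω, X ω ∂P + c := by
  rw [integral_add hX (integrable_const c), integral_const, probReal_univ, one_smul]

theorem full_reconstruction_mse_general {Ω : Type*} [MeasureSpace Ω]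
    (P : Measure Ω) [IsProbabilityMeasure P]
    (N S : ℕ) (hSN : S ≤ N) (g : Fin N → ℝ)
    (σ : Equiv.Perm (Fin N))
    (gS : Fin S → ℝ) (hgS : ∀ i : Fin S, gS i = g (σ (Fin.castLE hSN i)))
    (μS νS γ ψ : ℝ)
    (hνS : νS = (∑ i, (gS i) ^ 2) / S - μS ^ 2)
    (gShat : Ω → Fin S → ℝ)
    (hint : ∀ i, Integrable (fun ω => (gS i - gShat ω i) ^ 2) P)
    (hmse : (∫ ω, ∑ i, (gS i - gShat ω i) ^ 2 ∂P) = (S : ℝ) * νS * (1 - γ ^ 2 / ψ))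
    (ghat : Ω → Fin N → ℝ)
    (hins : ∀ ω (i : Fin S), ghat ω (σ (Fin.castLE hSN i)) = gShat ω i)
    (hzero : ∀ ω (j : Fin N), (∀ i : Fin S, σ (Fin.castLE hSN i) ≠ j) →
      ghat ω j = 0) :
    (∫ ω, ∑ j, (g j - ghat ω j) ^ 2 ∂P) =
      (∑ j, (g j) ^ 2) - (γ ^ 2 / ψ) * (∑ i, (gS i) ^ 2)
        - (S : ℝ) * μS ^ 2 * (1 - γ ^ 2 / ψ) := by
  have hsplit : ∀ ω, ∑ j, (g j - ghat ω j) ^ 2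
      = ∑ i, (gS i - gShat ω i) ^ 2 + (∑ j, g j ^ 2 - ∑ i, gS i ^ 2) := fun ω => by
    simpa only [← hgS, hins] using
      Fintype.sum_sq_sub_eq_of_eq_zero_off_range (fun i => σ (Fin.castLE hSN i))
        (σ.injective.comp (Fin.castLE_injective hSN)) g (ghat ω)
        fun j hj => hzero ω j fun i hi => hj ⟨i, hi⟩
  have hvar : (S : ℝ) * νS = ∑ i, gS i ^ 2 - S * μS ^ 2 := by
    rw [hνS]
    simpa only [Fintype.card_fin] using Fintype.card_mul_sum_sq_div_card_sub_sq gS μS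
  calc ∫ ω, ∑ j, (g j - ghat ω j) ^ 2 ∂P
      = ∫ ω, ∑ i, (gS i - gShat ω i) ^ 2 ∂P + (∑ j, g j ^ 2 - ∑ i, gS i ^ 2) := by
        simp_rw [hsplit]
        exact integral_add_const_of_isProbabilityMeasure
          (integrable_finsetSum _ fun i _ => hint i) _
    _ = _ := by rw [hmse, hvar]; ring

/-- MSE of the full reconstruction (eq. (23)): with `g_sp` the top-`S`
sparsification of `g` (positions given by the sorting permutation `σ`),
`g_S` the top-`S` value vector with sample mean `μ_S` and variance `ν_S`,
and `ĝ` obtained by inserting an estimate `ĝ_S` with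
`E[‖g_S − ĝ_S‖²] = S·ν_S·(1 − γ²/ψ)` into the top-`S` positions,
`E[‖g − ĝ‖²] = ‖g‖² − (γ²/ψ)‖g_S‖² − S·μ_S²·(1 − γ²/ψ)`. -/
theorem full_reconstruction_mse {Ω : Type*} [MeasureSpace Ω]
    (P : Measure Ω) [IsProbabilityMeasure P]
    (N S : ℕ) (hS : 0 < S) (hSN : S ≤ N) (g : Fin N → ℝ)
    (σ : Equiv.Perm (Fin N))
    (hsort : ∀ i j : Fin N, i ≤ j → |g (σ j)| ≤ |g (σ i)|)
    (gS : Fin S → ℝ) (hgS : ∀ i : Fin S, gS i = g (σ (Fin.castLE hSN i)))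
    (μS νS γ ψ : ℝ)
    (hμS : μS = (∑ i, gS i) / S)
    (hνS : νS = (∑ i, (gS i) ^ 2) / S - μS ^ 2)
    (gShat : Ω → Fin S → ℝ)
    (hint : ∀ i, Integrable (fun ω => (gS i - gShat ω i) ^ 2) P)
    (hmse : (∫ ω, ∑ i, (gS i - gShat ω i) ^ 2 ∂P) = (S : ℝ) * νS * (1 - γ ^ 2 / ψ))
    (ghat : Ω → Fin N → ℝ)
    (hins : ∀ ω (i : Fin S), ghat ω (σ (Fin.castLE hSN i)) = gShat ω i)
    (hzero : ∀ ω (j : Fin N), (∀ i : Fin S, σ (Fin.castLE hSN i) ≠ j) →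
      ghat ω j = 0) :
    (∫ ω, ∑ j, (g j - ghat ω j) ^ 2 ∂P) =
      (∑ j, (g j) ^ 2) - (γ ^ 2 / ψ) * (∑ i, (gS i) ^ 2)
        - (S : ℝ) * μS ^ 2 * (1 - γ ^ 2 / ψ) :=
  full_reconstruction_mse_general P N S hSN g σ gS hgS μS νS γ ψ hνS gShat hint hmse ghat hins hzero
end

section
/- Suppose for each device k and each iteration t, the residual Δ_k^{(t)} satisfies Δ_k^{(0)} = 0 and E[‖Δ_k^{(t)}‖²] ≤ (1−ζ_k)·E[‖∇F_k^{(t)} + Δ_k^{(t−1)}‖²] where ζ_k ∈ (0,1) and E[‖∇F_k^{(t)}‖²] ≤ ε². Then E[‖Δ_k^{(t)}‖²] ≤ 4(1−ζ_k)ε²/ζ_k² for all t. -/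
/-!
Young's inequality with parameter `κ = ζ / (2(1 - ζ))` turns the error-feedback recursion into
`E‖Δᵗ⁺¹‖² ≤ (1 - ζ/2) E‖Δᵗ‖² + (1 - ζ)(2 - ζ)ε²/ζ`, a contraction whose fixed point
`2(1 - ζ)(2 - ζ)ε²/ζ²` lies below `4(1 - ζ)ε²/ζ²`; since `Δ⁰ = 0`, that bound is invariant.
-/

open MeasureTheory

lemma sq_add_le_mul_sq_add_mul_sq {a b κ : ℝ} (hκ : 0 < κ) :
    (a + b) ^ 2 ≤ (1 + κ) * a ^ 2 + (1 + κ⁻¹) * b ^ 2 := by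
  have key : 0 ≤ κ⁻¹ * (κ * a - b) ^ 2 := by positivity
  have expand : κ⁻¹ * (κ * a - b) ^ 2 = κ * a ^ 2 - 2 * a * b + κ⁻¹ * b ^ 2 := by
    field_simp
    ring
  nlinarith

lemma norm_add_sq_le_mul_norm_sq_add_mul_norm_sq {E : Type*} [SeminormedAddGroup E]
    (x y : E) {κ : ℝ} (hκ : 0 < κ) :
    ‖x + y‖ ^ 2 ≤ (1 + κ) * ‖x‖ ^ 2 + (1 + κ⁻¹) * ‖y‖ ^ 2 :=
  (pow_le_pow_left₀ (norm_nonneg _) (norm_add_le x y) 2).trans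
    (sq_add_le_mul_sq_add_mul_sq hκ)

lemma integral_norm_add_sq_le {Ω E : Type*} [MeasurableSpace Ω] [SeminormedAddGroup E]
    {μ : Measure Ω} {f g : Ω → E} {κ : ℝ} (hκ : 0 < κ)
    (hf : Integrable (fun ω => ‖f ω‖ ^ 2) μ) (hg : Integrable (fun ω => ‖g ω‖ ^ 2) μ) :
    ∫ ω, ‖f ω + g ω‖ ^ 2 ∂μ ≤
      (1 + κ) * ∫ ω, ‖f ω‖ ^ 2 ∂μ + (1 + κ⁻¹) * ∫ ω, ‖g ω‖ ^ 2 ∂μ := by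
  rw [← integral_const_mul, ← integral_const_mul, ← integral_add (hf.const_mul _) (hg.const_mul _)]
  exact integral_mono_of_nonneg (.of_forall fun ω => by positivity)
    ((hf.const_mul _).add (hg.const_mul _))
    (.of_forall fun ω => norm_add_sq_le_mul_norm_sq_add_mul_norm_sq (f ω) (g ω) hκ)

lemma le_of_le_mul_add_of_mul_add_le {a : ℕ → ℝ} {q r B : ℝ} (hq : 0 ≤ q) (h0 : a 0 ≤ B)
    (hstep : ∀ t, a (t + 1) ≤ q * a t + r) (hB : q * B + r ≤ B) (t : ℕ) : a t ≤ B := by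
  induction t with
  | zero => exact h0
  | succ t ih => exact (hstep t).trans (le_trans (by gcongr) hB)

theorem residual_error_bound_general {Ω : Type*} [MeasureSpace Ω]
    (P : Measure Ω) (N : ℕ)
    (Δ G : ℕ → Ω → EuclideanSpace ℝ (Fin N))
    (ζ ε : ℝ) (hζ0 : 0 < ζ) (hζ1 : ζ < 1)
    (hΔ0 : ∀ ω, Δ 0 ω = 0)
    (hintΔ : ∀ t, Integrable (fun ω => ‖Δ t ω‖ ^ 2) P)
    (hintG : ∀ t, Integrable (fun ω => ‖G t ω‖ ^ 2) P)
    (hrec : ∀ t, (∫ ω, ‖Δ (t + 1) ω‖ ^ 2 ∂P) ≤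
      (1 - ζ) * ∫ ω, ‖G (t + 1) ω + Δ t ω‖ ^ 2 ∂P)
    (hG : ∀ t, (∫ ω, ‖G t ω‖ ^ 2 ∂P) ≤ ε ^ 2) :
    ∀ t, (∫ ω, ‖Δ t ω‖ ^ 2 ∂P) ≤ 4 * (1 - ζ) * ε ^ 2 / ζ ^ 2 := by
  have hρ : 0 < 1 - ζ := sub_pos.mpr hζ1
  set κ := ζ / (2 * (1 - ζ))
  have hκ : 0 < κ := by positivity
  have hq : (1 - ζ) * (1 + κ) = 1 - ζ / 2 := by
    simp only [κ]
    field_simp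
    ring
  have hr : (1 - ζ) * (1 + κ⁻¹) = (1 - ζ) * (2 - ζ) / ζ := by
    simp only [κ, inv_div]
    field_simp
    ring
  have hΔ0_sq : ∫ ω, ‖Δ 0 ω‖ ^ 2 ∂P = 0 := by simp [hΔ0]
  refine le_of_le_mul_add_of_mul_add_le (q := 1 - ζ / 2)
    (r := (1 - ζ) * (2 - ζ) / ζ * ε ^ 2) (by linarith) (by rw [hΔ0_sq]; positivity)
    (fun t => ?_) ?_
  · calc ∫ ω, ‖Δ (t + 1) ω‖ ^ 2 ∂P
        ≤ (1 - ζ) * ((1 + κ) * ∫ ω, ‖Δ t ω‖ ^ 2 ∂P + (1 + κ⁻¹) * ∫ ω, ‖G (t + 1) ω‖ ^ 2 ∂P) := by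
          refine (hrec t).trans (mul_le_mul_of_nonneg_left ?_ hρ.le)
          simpa only [add_comm (G _ _)] using integral_norm_add_sq_le hκ (hintΔ t) (hintG (t + 1))
      _ ≤ (1 - ζ) * (1 + κ) * ∫ ω, ‖Δ t ω‖ ^ 2 ∂P + (1 - ζ) * (1 + κ⁻¹) * ε ^ 2 := by
          have := hG (t + 1)
          rw [mul_add, ← mul_assoc, ← mul_assoc]
          gcongr
      _ = _ := by rw [hq, hr]
  · field_simp
    nlinarith [mul_nonneg (sq_nonneg ζ) (sq_nonneg ε)]

/-- Lemma 1 (residual error bound with error feedback): if `Δ⁰ = 0`,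
`E[‖Δᵗ⁺¹‖²] ≤ (1−ζ)·E[‖∇Fᵗ⁺¹ + Δᵗ‖²]` with `ζ ∈ (0,1)` and
`E[‖∇Fᵗ‖²] ≤ ε²`, then `E[‖Δᵗ‖²] ≤ 4(1−ζ)ε²/ζ²` for all `t`. -/
theorem residual_error_bound {Ω : Type*} [MeasureSpace Ω]
    (P : Measure Ω) [IsProbabilityMeasure P] (N : ℕ)
    (Δ G : ℕ → Ω → EuclideanSpace ℝ (Fin N))
    (ζ ε : ℝ) (hζ0 : 0 < ζ) (hζ1 : ζ < 1) (hε : 0 < ε)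
    (hΔ0 : ∀ ω, Δ 0 ω = 0)
    (hintΔ : ∀ t, Integrable (fun ω => ‖Δ t ω‖ ^ 2) P)
    (hintG : ∀ t, Integrable (fun ω => ‖G t ω‖ ^ 2) P)
    (hintGΔ : ∀ t, Integrable (fun ω => ‖G (t + 1) ω + Δ t ω‖ ^ 2) P)
    (hrec : ∀ t, (∫ ω, ‖Δ (t + 1) ω‖ ^ 2 ∂P) ≤
      (1 - ζ) * ∫ ω, ‖G (t + 1) ω + Δ t ω‖ ^ 2 ∂P)
    (hG : ∀ t, (∫ ω, ‖G t ω‖ ^ 2 ∂P) ≤ ε ^ 2) :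
    ∀ t, (∫ ω, ‖Δ t ω‖ ^ 2 ∂P) ≤ 4 * (1 - ζ) * ε ^ 2 / ζ ^ 2 :=
  residual_error_bound_general P N Δ G ζ ε hζ0 hζ1 hΔ0 hintΔ hintG hrec hG
end
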